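/- A non-abelian group of order pq, where p < q are primes with p dividing q − 1, has exactly one subgroup of order q (which is normal) and exactly q subgroups of order p; no two distinct subgroups of order p permute, while the subgroup of order q permutes with every subgroup. Hence its permutability graph is the star K_{1,q}. -/

import Mathlib

open Pointwise

/-!
The subgroups of order `q` and `p` are exactly the Sylow `q`- and `p`-subgroups. Since the
number of Sylow `q`-subgroups divides `p < q` and is `1 mod q`, the Sylow `q`-subgroup is unique,
hence normal, and so permutes with every subgroup. The number of Sylow `p`-subgroups divides `q`;
were it `1`, the two normal Sylow subgroups would commute elementwise and the product of their
generators would have order `pq`, making `G` cyclic. Finally, if two subgroups `H`, `K` of order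
`p` permute, then `HK = H ⊔ K` is a subgroup of order at most `p² < pq` divisible by `p` and
dividing `pq`, so it has order `p` and `H = K`.
-/

namespace Subgroup

variable {G : Type*} [Group G]

theorem coe_sup_of_mul_comm {H K : Subgroup G} (hHK : (H : Set G) * K = K * H) :
    ((H ⊔ K : Subgroup G) : Set G) = H * K := by
  let HK : Subgroup G :=
    { carrier := H * K
      one_mem' := ⟨1, H.one_mem, 1, K.one_mem, mul_one 1⟩
      mul_mem' := fun ha hb => by
        have hmul : (H * K : Set G) * (H * K) = H * K := by
          rw [mul_assoc, ← mul_assoc (K : Set G), ← hHK, mul_assoc, coe_mul_coe,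
            ← mul_assoc, coe_mul_coe]
        exact hmul ▸ Set.mul_mem_mul ha hb
      inv_mem' := fun ha => by
        have hinv : (H * K : Set G)⁻¹ = H * K := by
          rw [mul_inv_rev, inv_coe_set, inv_coe_set, hHK]
        exact hinv ▸ Set.inv_mem_inv.mpr ha }
  have hle : H ⊔ K ≤ HK :=
    sup_le (fun h hh => ⟨h, hh, 1, K.one_mem, mul_one h⟩)
      (fun k hk => ⟨1, H.one_mem, k, hk, one_mul k⟩)
  exact le_antisymm hle (mul_subset (SetLike.coe_subset_coe.mpr le_sup_left)
    (SetLike.coe_subset_coe.mpr le_sup_right))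

theorem mul_comm_of_normal_left (N H : Subgroup G) [N.Normal] :
    (N : Set G) * H = H * N := by
  rw [← normal_mul, ← mul_normal, sup_comm]

end Subgroup

namespace Sylow

variable {G : Type*} [Group G] [Finite G]

def equivSubgroupCardEq (p : ℕ) [Fact p.Prime] :
    {H : Subgroup G // Nat.card H = p ^ (Nat.card G).factorization p} ≃ Sylow p G where
  toFun H := ofCard H.1 H.2
  invFun P := ⟨P, P.card_eq_multiplicity⟩
  left_inv _ := rfl
  right_inv _ := rfl

theorem card_eq_one_of_index_lt {p : ℕ} [Fact p.Prime] (P : Sylow p G) (hP : P.index < p) :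
    Nat.card (Sylow p G) = 1 := by
  have hlt : Nat.card (Sylow p G) < p :=
    (Nat.le_of_dvd (Nat.pos_of_ne_zero Subgroup.index_ne_zero_of_finite)
      P.card_dvd_index).trans_lt hP
  have hmod : Nat.card (Sylow p G) % p = 1 % p := card_sylow_modEq_one p G
  rwa [Nat.mod_eq_of_lt hlt, Nat.mod_eq_of_lt (Fact.out : p.Prime).one_lt] at hmod

end Sylow

theorem Nat.factorization_mul_prime_right {p q : ℕ} (hp : p.Prime) (hq : q.Prime)
    (hpq : p ≠ q) : (p * q).factorization q = 1 := by
  simp [Nat.factorization_mul hp.ne_zero hq.ne_zero, hp.factorization, hq.factorization,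
    hpq]

section OrderPQ

variable {G : Type*} [Group G] [Finite G] {p q : ℕ} [Fact p.Prime] [Fact q.Prime]

def subgroupCardEqEquivSylow (hpq : p ≠ q) (hG : Nat.card G = p * q) :
    {H : Subgroup G // Nat.card H = q} ≃ Sylow q G :=
  (Equiv.subtypeEquivRight fun H => by
    rw [hG, Nat.factorization_mul_prime_right Fact.out Fact.out hpq, pow_one]).trans
    (Sylow.equivSubgroupCardEq q)

theorem Sylow.index_eq_of_card_eq_mul (hpq : p ≠ q) (hG : Nat.card G = p * q) (Q : Sylow q G) :
    (Q : Subgroup G).index = p := by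
  have hQ : Nat.card Q = q := ((subgroupCardEqEquivSylow hpq hG).symm Q).2
  have h := (Q : Subgroup G).index_mul_card
  rw [hQ, hG] at h
  exact Nat.eq_of_mul_eq_mul_right (Fact.out : q.Prime).pos h

theorem subsingleton_sylow_of_lt (hpq : p < q) (hG : Nat.card G = p * q) :
    Subsingleton (Sylow q G) := by
  obtain ⟨Q⟩ : Nonempty (Sylow q G) := inferInstance
  have hQ := Q.card_eq_one_of_index_lt (Sylow.index_eq_of_card_eq_mul hpq.ne hG Q ▸ hpq)
  exact (Nat.card_eq_one_iff_unique.mp hQ).1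

theorem isCyclic_of_subsingleton_sylow (hpq : p ≠ q) (hG : Nat.card G = p * q)
    [Subsingleton (Sylow p G)] [Subsingleton (Sylow q G)] : IsCyclic G := by
  have hp : p.Prime := Fact.out
  have hq : q.Prime := Fact.out
  have hcop : p.Coprime q := (Nat.coprime_primes hp hq).mpr hpq
  obtain ⟨x, hx⟩ := exists_prime_orderOf_dvd_card' p (hG ▸ dvd_mul_right p q)
  obtain ⟨y, hy⟩ := exists_prime_orderOf_dvd_card' q (hG ▸ dvd_mul_left q p)
  have hxP : Nat.card (Subgroup.zpowers x) = p := (Nat.card_zpowers x).trans hx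
  have hyQ : Nat.card (Subgroup.zpowers y) = q := (Nat.card_zpowers y).trans hy
  have hxN : (Subgroup.zpowers x).Normal :=
    (subgroupCardEqEquivSylow hpq.symm (hG.trans (mul_comm p q))
      ⟨_, hxP⟩).normal_of_subsingleton
  have hyN : (Subgroup.zpowers y).Normal :=
    (subgroupCardEqEquivSylow hpq hG ⟨_, hyQ⟩).normal_of_subsingleton
  have hxy : Commute x y :=
    Subgroup.commute_of_normal_of_disjoint _ _ hxN hyN
      (Subgroup.disjoint_of_coprime_natCard (hxP ▸ hyQ ▸ hcop)) x y
      (Subgroup.mem_zpowers x) (Subgroup.mem_zpowers y)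
  refine isCyclic_of_orderOf_eq_card (x * y) ?_
  rw [hxy.orderOf_mul_eq_mul_orderOf_of_coprime (hx ▸ hy ▸ hcop), hx, hy, hG]

theorem card_sylow_eq_of_not_isCyclic (hpq : p ≠ q) (hG : Nat.card G = p * q)
    [Subsingleton (Sylow q G)] (hnc : ¬ IsCyclic G) : Nat.card (Sylow p G) = q := by
  obtain ⟨P⟩ : Nonempty (Sylow p G) := inferInstance
  have hdvd : Nat.card (Sylow p G) ∣ q :=
    Sylow.index_eq_of_card_eq_mul hpq.symm (hG.trans (mul_comm p q)) P ▸ P.card_dvd_index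
  refine ((Fact.out : q.Prime).eq_one_or_self_of_dvd _ hdvd).resolve_left fun h => hnc ?_
  have : Subsingleton (Sylow p G) := (Nat.card_eq_one_iff_unique.mp h).1
  exact isCyclic_of_subsingleton_sylow hpq hG

theorem eq_of_mul_comm_of_card_eq (hpq : p < q) (hG : Nat.card G = p * q) {H K : Subgroup G}
    (hH : Nat.card H = p) (hK : Nat.card K = p) (hHK : (H : Set G) * K = K * H) : H = K := by
  have hp : p.Prime := Fact.out
  obtain ⟨e, he⟩ : p ∣ Nat.card (H ⊔ K : Subgroup G) :=
    hH ▸ Subgroup.card_dvd_of_le le_sup_left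
  have he_dvd : e ∣ q := by
    have := hG ▸ Subgroup.card_subgroup_dvd_card (H ⊔ K)
    exact (Nat.mul_dvd_mul_iff_left hp.pos).mp (he ▸ this)
  have hle : p * e ≤ p * p :=
    calc p * e = Nat.card (H ⊔ K : Subgroup G) := he.symm
      _ ≤ Nat.card H * Nat.card K := by
        rw [← SetLike.coe_sort_coe, Subgroup.coe_sup_of_mul_comm hHK]
        exact Set.natCard_mul_le
      _ = p * p := by rw [hH, hK]
  rcases (Fact.out : q.Prime).eq_one_or_self_of_dvd e he_dvd with rfl | rfl
  · have hHsup := Subgroup.eq_of_le_of_card_ge le_sup_left (by rw [he, mul_one, hH])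
    have hKsup := Subgroup.eq_of_le_of_card_ge le_sup_right (by rw [he, mul_one, hK])
    exact hHsup.trans hKsup.symm
  · exact absurd (Nat.le_of_mul_le_mul_left hle hp.pos) hpq.not_ge

end OrderPQ

theorem stmt9_general {p q : ℕ} (hp : p.Prime) (hq : q.Prime) (hpq : p < q)
    (G : Type*) [Group G] [Finite G] (hG : Nat.card G = p * q)
    (hna : ¬ ∀ a b : G, a * b = b * a) :
    (∃! Q : Subgroup G, Nat.card Q = q) ∧
    (∀ Q : Subgroup G, Nat.card Q = q →
      Q.Normal ∧ ∀ H : Subgroup G, (Q : Set G) * (H : Set G) = (H : Set G) * (Q : Set G)) ∧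
    Nat.card {H : Subgroup G // Nat.card H = p} = q ∧
    ∀ H K : Subgroup G, Nat.card H = p → Nat.card K = p → H ≠ K →
      (H : Set G) * (K : Set G) ≠ (K : Set G) * (H : Set G) := by
  have : Fact p.Prime := ⟨hp⟩
  have : Fact q.Prime := ⟨hq⟩
  have : Subsingleton (Sylow q G) := subsingleton_sylow_of_lt hpq hG
  let e := subgroupCardEqEquivSylow hpq.ne hG
  have hcyc : ¬ IsCyclic G := fun _ => hna fun a b => (IsCyclic.commGroup (α := G)).mul_comm a b
  have hnormal (Q : Subgroup G) (hQ : Nat.card Q = q) : Q.Normal :=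
    (e ⟨Q, hQ⟩).normal_of_subsingleton
  refine ⟨?_, fun Q hQ => ⟨hnormal Q hQ, ?_⟩, ?_, fun H K hH hK hne hHK => hne ?_⟩
  · have := e.subsingleton
    obtain ⟨Q⟩ := e.nonempty
    exact ⟨Q, Q.2, fun Q' hQ' => congrArg Subtype.val (Subsingleton.elim ⟨Q', hQ'⟩ Q)⟩
  · have := hnormal Q hQ
    exact fun H => Subgroup.mul_comm_of_normal_left Q H
  · rw [Nat.card_congr (subgroupCardEqEquivSylow hpq.ne.symm (hG.trans (mul_comm p q)))]
    exact card_sylow_eq_of_not_isCyclic hpq.ne hG hcyc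
  · exact eq_of_mul_comm_of_card_eq hpq hG hH hK hHK

theorem stmt9 {p q : ℕ} (hp : p.Prime) (hq : q.Prime) (hpq : p < q) (hdvd : p ∣ q - 1)
    (G : Type*) [Group G] [Finite G] (hG : Nat.card G = p * q)
    (hna : ¬ ∀ a b : G, a * b = b * a) :
    (∃! Q : Subgroup G, Nat.card Q = q) ∧
    (∀ Q : Subgroup G, Nat.card Q = q →
      Q.Normal ∧ ∀ H : Subgroup G, (Q : Set G) * (H : Set G) = (H : Set G) * (Q : Set G)) ∧
    Nat.card {H : Subgroup G // Nat.card H = p} = q ∧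
    ∀ H K : Subgroup G, Nat.card H = p → Nat.card K = p → H ≠ K →
      (H : Set G) * (K : Set G) ≠ (K : Set G) * (H : Set G) :=
  stmt9_general hp hq hpq G hG hna
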